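/- arXiv:2409.08911 — 2 statements merged into one kernel-verified Lean document; each statement's English description precedes it below -/
import Mathlib

section
/- For every integer a and every prime p and every positive integer m, the p-adic valuation of a^(p^m) - a equals the p-adic valuation of a^p - a. -/
/-!
If `p^k ∣ x - y` with `k ≥ 1`, then `p` also divides the cofactor `∑ xⁱ y^(p-1-i)` of
`x^p - y^p = (x - y) ∑ xⁱ y^(p-1-i)`, so `p^(k+1) ∣ x^p - y^p`. Applied to `x = a^(p^(m-1))`,
`y = a`, this shows that `a^(p^m) - a^p` is divisible by one more power of `p` than
`a^(p^(m-1)) - a`; by induction, `a^(p^m) - a` and `a^p - a` are divisible by exactly the same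
powers of `p`, the induction starting from Fermat's little theorem `p ∣ a^p - a`.
-/

section CommRing

variable {R : Type*} [CommRing R] {p : ℕ}

theorem pow_succ_dvd_pow_sub_pow_of_pow_dvd_sub {x y : R} {k : ℕ} (hk : 1 ≤ k)
    (h : (p : R) ^ k ∣ x - y) : (p : R) ^ (k + 1) ∣ x ^ p - y ^ p := by
  rw [← geom_sum₂_mul, pow_succ']
  exact mul_dvd_mul (dvd_geom_sum₂_self ((dvd_pow_self _ (by omega)).trans h)) h

theorem pow_dvd_pow_pow_sub_self_of_pow_dvd_pow_sub_self {a : R} {k : ℕ}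
    (h : (p : R) ^ k ∣ a ^ p - a) (m : ℕ) : (p : R) ^ k ∣ a ^ p ^ m - a := by
  rcases Nat.eq_zero_or_pos k with rfl | hk
  · simp
  induction m with
  | zero => simp
  | succ m ih =>
    have hstep : (p : R) ^ k ∣ (a ^ p ^ m) ^ p - a ^ p :=
      (pow_dvd_pow _ k.le_succ).trans (pow_succ_dvd_pow_sub_pow_of_pow_dvd_sub hk ih)
    rw [pow_succ, pow_mul, ← sub_add_sub_cancel _ (a ^ p)]
    exact dvd_add hstep h

theorem pow_dvd_pow_pow_sub_self_iff {a : R} (hfermat : (p : R) ∣ a ^ p - a) {m : ℕ}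
    (hm : 1 ≤ m) (k : ℕ) : (p : R) ^ k ∣ a ^ p ^ m - a ↔ (p : R) ^ k ∣ a ^ p - a := by
  refine ⟨fun h => ?_, fun h => pow_dvd_pow_pow_sub_self_of_pow_dvd_pow_sub_self h m⟩
  induction k with
  | zero => simp
  | succ k ih =>
    rcases Nat.eq_zero_or_pos k with rfl | hk
    · simpa using hfermat
    have hprev : (p : R) ^ k ∣ a ^ p - a := ih ((pow_dvd_pow _ k.le_succ).trans h)
    obtain ⟨n, rfl⟩ : ∃ n, m = n + 1 := ⟨m - 1, by omega⟩
    have hgap : (p : R) ^ (k + 1) ∣ (a ^ p ^ n) ^ p - a ^ p :=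
      pow_succ_dvd_pow_sub_pow_of_pow_dvd_sub hk
        (pow_dvd_pow_pow_sub_self_of_pow_dvd_pow_sub_self hprev n)
    rw [← pow_mul, ← pow_succ] at hgap
    simpa using dvd_sub h hgap

end CommRing

theorem Int.prime_dvd_pow_sub_self {p : ℕ} (hp : p.Prime) (a : ℤ) : (p : ℤ) ∣ a ^ p - a := by
  have : Fact p.Prime := ⟨hp⟩
  refine (ZMod.intCast_eq_intCast_iff_dvd_sub a (a ^ p) p).1 ?_
  push_cast
  exact (ZMod.pow_card _).symm

theorem wieferich_exponent_doesnt_matter (p : ℕ) (hp : p.Prime) (a : ℤ) (m : ℕ) (hm : 1 ≤ m) :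
    emultiplicity (p : ℤ) (a ^ (p ^ m) - a) = emultiplicity (p : ℤ) (a ^ p - a) :=
  emultiplicity_eq_emultiplicity_iff.2
    (pow_dvd_pow_pow_sub_self_iff (Int.prime_dvd_pow_sub_self hp a) hm)
end

section
/- Let K be a field, n ≥ 2, and a a nonzero element of K. If for all primes p dividing n we have a ∉ K^p, and if 4 ∣ n then a ∉ -4K^4, then x^n - a is irreducible in K[x]. -/
/-!
Write `n = 2 ^ s * m` with `m` odd. Since `X ^ m - a` is irreducible (the odd case), Capelli's
composition criterion reduces the claim to the irreducibility of `X ^ 2 ^ s - α` over `L = K(α)`,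
where `α ^ m = a`. For odd `m` the norm `N_{L/K}` maps `α` to `a`, squares to squares and
`-4 L⁴` into `-4 K⁴`, so `α` inherits the hypotheses on `a`. The `2`-power case goes by induction
on `s` through `K(√a)`: if `±√a = (c + d √a) ^ 2` then `c ^ 2 + a d ^ 2 = 0` and `2 c d = ±1`,
whence `a = -4 c ^ 4`; and `√a = -4 b ^ 4` means that `-√a = (2 b ^ 2) ^ 2`.
-/

open Polynomial IntermediateField

lemma PowerBasis.exists_mul_sq_eq_neg_four_mul_pow_four {R S : Type*} [CommRing R] [CommRing S]
    [Nontrivial S] [Algebra R S] (pb : PowerBasis R S) (hdim : pb.dim = 2) {a u : R}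
    (ha : pb.gen ^ 2 = algebraMap R S a) {b : S} (hb : b ^ 2 = algebraMap R S u * pb.gen) :
    ∃ c : R, a * u ^ 2 = -4 * c ^ 4 := by
  obtain ⟨g, hg, rfl⟩ := pb.exists_eq_aeval b
  rw [eq_X_add_C_of_natDegree_le_one (by omega : g.natDegree ≤ 1)] at hb
  set c := g.coeff 0
  set d := g.coeff 1
  set p := C (2 * c * d - u) * X + C (c ^ 2 + a * d ^ 2)
  have hroot : aeval pb.gen p = 0 := by
    simp only [p, map_add, map_mul, map_sub, map_pow, map_ofNat, aeval_C, aeval_X] at hb ⊢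
    linear_combination hb - algebraMap R S d ^ 2 * ha
  have hp : p = 0 := by
    by_contra hp
    have := pb.dim_le_natDegree_of_root hp hroot
    have : p.natDegree ≤ 1 := natDegree_linear_le
    omega
  have hc : c ^ 2 + a * d ^ 2 = 0 := by
    simpa [p, -map_add, -map_mul, -map_pow] using congrArg (coeff · 0) hp
  have hu : 2 * c * d - u = 0 := by
    simpa [p, -map_add, -map_mul, -map_pow] using congrArg (coeff · 1) hp
  exact ⟨c, by linear_combination 4 * c ^ 2 * hc - a * (2 * c * d + u) * hu⟩

lemma Odd.exists_neg_four_pow_mul_pow_four_eq {R : Type*} [CommRing R] {m : ℕ} (hm : Odd m)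
    (c : R) : ∃ k : R, (-4) ^ m * c ^ 4 = -4 * k ^ 4 := by
  obtain ⟨t, rfl⟩ := hm
  have h16 : (-4 : R) ^ (2 * t) = ((2 : R) ^ t) ^ 4 := by
    rw [pow_mul, ← pow_mul (2 : R) t 4, mul_comm t 4, pow_mul]; norm_num
  exact ⟨2 ^ t * c, by rw [pow_succ, h16]; ring⟩

section MinpolyEqXPowSubC

variable {K E : Type*} [Field K] [Field E] [Algebra K E] {x : E} {a : K} {m : ℕ}

lemma isIntegral_of_minpoly_eq_X_pow_sub_C (hm : m ≠ 0) (hx : minpoly K x = X ^ m - C a) :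
    IsIntegral K x :=
  minpoly.ne_zero_iff.mp (hx ▸ (monic_X_pow_sub_C a hm).ne_zero)

lemma finrank_adjoin_simple_of_minpoly_eq_X_pow_sub_C (hm : m ≠ 0)
    (hx : minpoly K x = X ^ m - C a) : Module.finrank K K⟮x⟯ = m := by
  rw [adjoin.finrank (isIntegral_of_minpoly_eq_X_pow_sub_C hm hx), hx, natDegree_X_pow_sub_C]

lemma norm_adjoinSimple_gen_of_minpoly_eq_X_pow_sub_C (hm : m ≠ 0)
    (hx : minpoly K x = X ^ m - C a) :
    Algebra.norm K (AdjoinSimple.gen K x) = (-1) ^ (m + 1) * a := by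
  have hint := isIntegral_of_minpoly_eq_X_pow_sub_C hm hx
  have hdim : (adjoin.powerBasis hint).dim = m := by
    rw [adjoin.powerBasis_dim, hx, natDegree_X_pow_sub_C]
  rw [← adjoin.powerBasis_gen hint, Algebra.PowerBasis.norm_gen_eq_coeff_zero_minpoly,
    adjoin.powerBasis_gen hint, minpoly_gen, hx, hdim]
  simp [coeff_X_pow, hm.symm, pow_succ]

lemma exists_mul_sq_eq_neg_four_mul_pow_four_of_minpoly_eq (hx : minpoly K x = X ^ 2 - C a)
    {u : K} {b : K⟮x⟯} (hb : b ^ 2 = algebraMap K K⟮x⟯ u * AdjoinSimple.gen K x) :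
    ∃ c : K, a * u ^ 2 = -4 * c ^ 4 := by
  have hint := isIntegral_of_minpoly_eq_X_pow_sub_C two_ne_zero hx
  have hgen : AdjoinSimple.gen K x ^ 2 = algebraMap K K⟮x⟯ a := by
    simpa [hx, sub_eq_zero] using aeval_gen_minpoly K x
  refine (adjoin.powerBasis hint).exists_mul_sq_eq_neg_four_mul_pow_four ?_ ?_ (b := b) ?_
  · rw [adjoin.powerBasis_dim, hx, natDegree_X_pow_sub_C]
  all_goals rwa [adjoin.powerBasis_gen]

end MinpolyEqXPowSubC

theorem X_pow_two_pow_sub_C_irreducible {K : Type*} [Field K] (s : ℕ) {a : K}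
    (hsq : s ≠ 0 → ∀ b : K, b ^ 2 ≠ a) (h4 : 2 ≤ s → ∀ b : K, a ≠ -4 * b ^ 4) :
    Irreducible (X ^ 2 ^ s - C a) := by
  induction s generalizing K a with
  | zero => simpa using irreducible_X_sub_C a
  | succ s ih =>
    rw [pow_succ]
    refine X_pow_mul_sub_C_irreducible
      (X_pow_sub_C_irreducible_of_prime Nat.prime_two (hsq s.succ_ne_zero)) ?_
    intro E _ _ x hx
    apply ih
    · intro hs b hb
      obtain ⟨c, hc⟩ := exists_mul_sq_eq_neg_four_mul_pow_four_of_minpoly_eq hx (u := 1)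
        (by simpa using hb)
      exact h4 (by omega) c (by simpa using hc)
    · intro hs b hb
      obtain ⟨c, hc⟩ := exists_mul_sq_eq_neg_four_mul_pow_four_of_minpoly_eq hx (u := -1)
        (b := 2 * b ^ 2) (by rw [hb, map_neg, map_one]; ring)
      exact h4 (by omega) c (by simpa using hc)

theorem lang_irreducibility_general (K : Type*) [Field K] (n : ℕ) (hn : 2 ≤ n) (a : K)
    (h1 : ∀ p : ℕ, p.Prime → p ∣ n → ¬ ∃ k : K, k ^ p = a)
    (h2 : 4 ∣ n → ¬ ∃ k : K, a = -4 * k ^ 4) :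
    Irreducible (X ^ n - C a) := by
  obtain ⟨s, m, hodd, rfl⟩ := Nat.exists_eq_two_pow_mul_odd (by omega : n ≠ 0)
  have hm : m ≠ 0 := hodd.pos.ne'
  refine X_pow_mul_sub_C_irreducible (X_pow_sub_C_irreducible_of_odd hodd
    fun p hp hpm b hb ↦ h1 p hp (hpm.mul_left _) ⟨b, hb⟩) ?_
  intro E _ _ x hx
  have hnorm : Algebra.norm K (AdjoinSimple.gen K x) = a := by
    rw [norm_adjoinSimple_gen_of_minpoly_eq_X_pow_sub_C hm hx, hodd.add_one.neg_one_pow, one_mul]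
  apply X_pow_two_pow_sub_C_irreducible
  · intro hs b hb
    exact h1 2 Nat.prime_two (dvd_mul_of_dvd_left (dvd_pow_self 2 hs) m)
      ⟨Algebra.norm K b, by rw [← map_pow, hb, hnorm]⟩
  · intro hs b hb
    obtain ⟨k, hk⟩ := hodd.exists_neg_four_pow_mul_pow_four_eq (Algebra.norm K b)
    refine h2 (dvd_mul_of_dvd_left (pow_dvd_pow 2 hs) m) ⟨k, ?_⟩
    have h4 : (-4 : K⟮x⟯) = algebraMap K _ (-4) := by rw [map_neg, map_ofNat]
    rw [← hk, ← hnorm, hb, h4, map_mul, map_pow, Algebra.norm_algebraMap,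
      finrank_adjoin_simple_of_minpoly_eq_X_pow_sub_C hm hx]

theorem lang_irreducibility (K : Type*) [Field K] (n : ℕ) (hn : 2 ≤ n) (a : K) (ha : a ≠ 0)
    (h1 : ∀ p : ℕ, p.Prime → p ∣ n → ¬ ∃ k : K, k ^ p = a)
    (h2 : 4 ∣ n → ¬ ∃ k : K, a = -4 * k ^ 4) :
    Irreducible (X ^ n - C a) :=
  lang_irreducibility_general K n hn a h1 h2
end
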